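/- arXiv:1305.4034 — 4 statements merged into one kernel-verified Lean document; each statement's English description precedes it below -/
import Mathlib

section
/- (L, Δ₁, Δ₂) is a Sierpinski object in BFTS: for every fuzzy bitopological space (X,τ₁,τ₂), the family F of all bicontinuous maps X → L is initial; that is, for any fuzzy bitopological space (Y,δ₁,δ₂) and any function g : Y → X such that f ∘ g is bicontinuous for all f ∈ F, the map g itself is bicontinuous. -/
noncomputable section
attribute [local instance] Classical.propDecidable

/-- Membership in the frame `L = {(a,b) ∈ [0,1]² : a + b ≤ 1}`. -/
abbrev Lmem (p : ℝ × ℝ) : Prop :=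
  0 ≤ p.1 ∧ p.1 ≤ 1 ∧ 0 ≤ p.2 ∧ p.2 ≤ 1 ∧ p.1 + p.2 ≤ 1

/-- The carrier of the frame `L`. -/
abbrev LL : Type := {p : ℝ × ℝ // Lmem p}

/-- The unit square `I² = [0,1] × [0,1]`. -/
abbrev I2 : Type := {p : ℝ × ℝ // 0 ≤ p.1 ∧ p.1 ≤ 1 ∧ 0 ≤ p.2 ∧ p.2 ≤ 1}

/-- `2I = (I × {0}) ∪ ({0} × I)`. -/
abbrev TwoI : Type :=
  {p : ℝ × ℝ // (0 ≤ p.1 ∧ p.1 ≤ 1 ∧ p.2 = 0) ∨ (p.1 = 0 ∧ 0 ≤ p.2 ∧ p.2 ≤ 1)}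

/-- A fuzzy (Chang) topology on `X`: a family of `[0,1]`-valued maps containing the
constants `0̄`, `1̄`, closed under arbitrary (nonempty) pointwise suprema and binary
pointwise infima. -/
def IsFuzzyTopology {X : Type} (τ : Set (X → ℝ)) : Prop :=
  (∀ μ ∈ τ, ∀ x, 0 ≤ μ x ∧ μ x ≤ 1) ∧
  ((fun _ => (0:ℝ)) ∈ τ) ∧
  ((fun _ => (1:ℝ)) ∈ τ) ∧
  (∀ S : Set (X → ℝ), S.Nonempty → S ⊆ τ → (fun x => ⨆ μ : S, (μ : X → ℝ) x) ∈ τ) ∧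
  (∀ μ ∈ τ, ∀ ν ∈ τ, (fun x => min (μ x) (ν x)) ∈ τ)

/-- Bicontinuity of a map between fuzzy bitopological spaces. -/
def Bicontinuous {X Y : Type} (f : X → Y)
    (τ₁ τ₂ : Set (X → ℝ)) (δ₁ δ₂ : Set (Y → ℝ)) : Prop :=
  (∀ ν ∈ δ₁, (fun x => ν (f x)) ∈ τ₁) ∧ (∀ ν ∈ δ₂, (fun x => ν (f x)) ∈ τ₂)

/-- The `T₀` separation property for a fuzzy bitopological space. -/
def IsT0 {X : Type} (τ₁ τ₂ : Set (X → ℝ)) : Prop :=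
  ∀ x y : X, x ≠ y → ∃ μ ∈ τ₁ ∪ τ₂, μ x ≠ μ y

/-- First projection `p₁` on `L`. -/
def pOne : LL → ℝ := fun z => z.1.1

/-- The map `1̄ - p₂` on `L`. -/
def pTwoC : LL → ℝ := fun z => 1 - z.1.2

/-- The fuzzy topology `Δ₁ = {0̄, p₁, 1̄}` on `L`. -/
def Delta1 : Set (LL → ℝ) := {fun _ => 0, pOne, fun _ => 1}

/-- The fuzzy topology `Δ₂ = {0̄, 1̄ - p₂, 1̄}` on `L`. -/
def Delta2 : Set (LL → ℝ) := {fun _ => 0, pTwoC, fun _ => 1}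

/-- The fuzzy topology `Π₁ = {0̄, π₁, 1̄}` on `I²`. -/
def Pi1 : Set (I2 → ℝ) := {fun _ => 0, fun w => w.1.1, fun _ => 1}

/-- The fuzzy topology `Π₂ = {0̄, π₂, 1̄}` on `I²`. -/
def Pi2 : Set (I2 → ℝ) := {fun _ => 0, fun w => w.1.2, fun _ => 1}

/-- The map `e : L → I²`, `e(a,b) = (a, 1-b)`. -/
def eMap : LL → I2 := fun z =>
  ⟨(z.1.1, 1 - z.1.2), by
    obtain ⟨h1, h2, h3, h4, h5⟩ := z.2
    exact ⟨h1, h2, by simp only [Prod.snd]; linarith, by simp only [Prod.snd]; linarith⟩⟩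

/-- The fuzzy set `q₁` on `2I`. -/
def q1 : TwoI → ℝ := fun z => if z.1.2 = 0 then z.1.1 else 0

/-- The fuzzy set `q₂` on `2I`. -/
def q2 : TwoI → ℝ := fun z => if z.1.1 = 0 then z.1.2 else 0

/-- The fuzzy topology `Ω₁ = {0̄, q₁, 1̄}` on `2I`. -/
def Omega1 : Set (TwoI → ℝ) := {fun _ => 0, q1, fun _ => 1}

/-- The fuzzy topology `Ω₂ = {0̄, q₂, 1̄}` on `2I`. -/
def Omega2 : Set (TwoI → ℝ) := {fun _ => 0, q2, fun _ => 1}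

/-- The join `τ₁ ∨ τ₂`: the smallest fuzzy topology containing `τ₁` and `τ₂`. -/
def joinFT {X : Type} (τ₁ τ₂ : Set (X → ℝ)) : Set (X → ℝ) :=
  ⋂₀ {δ : Set (X → ℝ) | IsFuzzyTopology δ ∧ τ₁ ⊆ δ ∧ τ₂ ⊆ δ}

/-!
Every `τ₁`-open `μ` is `p₁ ∘ f` for the bicontinuous map `f = (μ, 0) : X → L`, and every
`τ₂`-open `μ` is `(1̄ - p₂) ∘ f` for the bicontinuous map `f = (0, 1 - μ)`. Bicontinuity of
`f ∘ g` then says exactly that `μ ∘ g` is `δ₁`-open, respectively `δ₂`-open.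
-/

namespace IsFuzzyTopology

variable {X : Type} {τ : Set (X → ℝ)}

theorem nonneg_and_le_one (hτ : IsFuzzyTopology τ) {μ : X → ℝ} (hμ : μ ∈ τ) (x : X) :
    0 ≤ μ x ∧ μ x ≤ 1 :=
  hτ.1 μ hμ x

theorem zero_mem (hτ : IsFuzzyTopology τ) : (fun _ => (0 : ℝ)) ∈ τ := hτ.2.1

theorem one_mem (hτ : IsFuzzyTopology τ) : (fun _ => (1 : ℝ)) ∈ τ := hτ.2.2.1

end IsFuzzyTopology

theorem bicontinuous_to_L {X : Type} {τ₁ τ₂ : Set (X → ℝ)}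
    (hτ₁ : IsFuzzyTopology τ₁) (hτ₂ : IsFuzzyTopology τ₂) {f : X → LL}
    (h₁ : (fun x => pOne (f x)) ∈ τ₁) (h₂ : (fun x => pTwoC (f x)) ∈ τ₂) :
    Bicontinuous f τ₁ τ₂ Delta1 Delta2 := by
  constructor
  · rintro ν (rfl | rfl | rfl)
    exacts [hτ₁.zero_mem, h₁, hτ₁.one_mem]
  · rintro ν (rfl | rfl | rfl)
    exacts [hτ₂.zero_mem, h₂, hτ₂.one_mem]

namespace LL

variable {X : Type} (μ : X → ℝ) (hμ : ∀ x, 0 ≤ μ x ∧ μ x ≤ 1)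

def ofFst : X → LL := fun x =>
  ⟨(μ x, 0), (hμ x).1, (hμ x).2, le_rfl, zero_le_one, by simpa using (hμ x).2⟩

def ofSndCompl : X → LL := fun x =>
  ⟨(0, 1 - μ x), le_rfl, zero_le_one, by linarith [(hμ x).2], by linarith [(hμ x).1],
    by linarith [(hμ x).1]⟩

theorem pTwoC_ofFst : (fun x => pTwoC (ofFst μ hμ x)) = fun _ => 1 := by
  simp [pTwoC, ofFst]

theorem pTwoC_ofSndCompl : (fun x => pTwoC (ofSndCompl μ hμ x)) = μ := by
  simp [pTwoC, ofSndCompl]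

end LL

theorem bicontinuous_ofFst {X : Type} {τ₁ τ₂ : Set (X → ℝ)}
    (hτ₁ : IsFuzzyTopology τ₁) (hτ₂ : IsFuzzyTopology τ₂) {μ : X → ℝ} (hμ : μ ∈ τ₁) :
    Bicontinuous (LL.ofFst μ (hτ₁.nonneg_and_le_one hμ)) τ₁ τ₂ Delta1 Delta2 :=
  bicontinuous_to_L hτ₁ hτ₂ hμ (by rw [LL.pTwoC_ofFst]; exact hτ₂.one_mem)

theorem bicontinuous_ofSndCompl {X : Type} {τ₁ τ₂ : Set (X → ℝ)}
    (hτ₁ : IsFuzzyTopology τ₁) (hτ₂ : IsFuzzyTopology τ₂) {μ : X → ℝ} (hμ : μ ∈ τ₂) :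
    Bicontinuous (LL.ofSndCompl μ (hτ₂.nonneg_and_le_one hμ)) τ₁ τ₂ Delta1 Delta2 :=
  bicontinuous_to_L hτ₁ hτ₂ hτ₁.zero_mem (by rw [LL.pTwoC_ofSndCompl]; exact hμ)

theorem stmt9_general (X Y : Type) (τ₁ τ₂ : Set (X → ℝ)) (δ₁ δ₂ : Set (Y → ℝ))
    (hτ₁ : IsFuzzyTopology τ₁) (hτ₂ : IsFuzzyTopology τ₂)
    (g : Y → X)
    (h : ∀ f : X → LL, Bicontinuous f τ₁ τ₂ Delta1 Delta2 →
      Bicontinuous (fun y => f (g y)) δ₁ δ₂ Delta1 Delta2) :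
    Bicontinuous g δ₁ δ₂ τ₁ τ₂ := by
  constructor
  · intro μ hμ
    exact (h _ (bicontinuous_ofFst hτ₁ hτ₂ hμ)).1 pOne (by simp [Delta1])
  · intro μ hμ
    have hμg := (h _ (bicontinuous_ofSndCompl hτ₁ hτ₂ hμ)).2 pTwoC (by simp [Delta2])
    simpa only [pTwoC, LL.ofSndCompl, sub_sub_cancel] using hμg

/-- `(L, Δ₁, Δ₂)` is a Sierpinski object in `BFTS`: the family of
all bicontinuous maps into it is initial. -/
theorem stmt9 (X Y : Type) (τ₁ τ₂ : Set (X → ℝ)) (δ₁ δ₂ : Set (Y → ℝ))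
    (hτ₁ : IsFuzzyTopology τ₁) (hτ₂ : IsFuzzyTopology τ₂)
    (hδ₁ : IsFuzzyTopology δ₁) (hδ₂ : IsFuzzyTopology δ₂)
    (g : Y → X)
    (h : ∀ f : X → LL, Bicontinuous f τ₁ τ₂ Delta1 Delta2 →
      Bicontinuous (fun y => f (g y)) δ₁ δ₂ Delta1 Delta2) :
    Bicontinuous g δ₁ δ₂ τ₁ τ₂ :=
  stmt9_general X Y τ₁ τ₂ δ₁ δ₂ hτ₁ hτ₂ g h
end
end

section
/- A fuzzy bitopological space (X, τ₁, τ₂) is T₀ if and only if the family F of all bicontinuous maps from (X,τ₁,τ₂) to (L,Δ₁,Δ₂) separates points of X, i.e., for all x ≠ y in X there exists f ∈ F with f(x) ≠ f(y). -/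
noncomputable section
attribute [local instance] Classical.propDecidable

/-! The fuzzy sets `p₁` and `1̄ - p₂` of `Δ₁` and `Δ₂` together determine a point of `L`, so a
bicontinuous map separating `x` and `y` yields a fuzzy open set separating them. Conversely a
fuzzy open set `μ` of `τ₁` (resp. `τ₂`) is the pullback of `p₁` (resp. `1̄ - p₂`) along
`z ↦ (μ z, 0)` (resp. `z ↦ (0, 1 - μ z)`), and these maps pull the remaining open sets of `L`
back to constants. -/

section Separation

variable {X : Type} {τ₁ τ₂ : Set (X → ℝ)}

theorem pOne_ne_or_pTwoC_ne {z w : LL} (h : z ≠ w) : pOne z ≠ pOne w ∨ pTwoC z ≠ pTwoC w := by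
  by_contra! hzw
  obtain ⟨h₁, h₂⟩ := hzw
  exact h (Subtype.ext (Prod.ext h₁ (by unfold pTwoC at h₂; linarith)))

theorem bicontinuous_delta_of_mem (h₁ : IsFuzzyTopology τ₁) (h₂ : IsFuzzyTopology τ₂)
    {f : X → LL} (hf₁ : (fun x => pOne (f x)) ∈ τ₁) (hf₂ : (fun x => pTwoC (f x)) ∈ τ₂) :
    Bicontinuous f τ₁ τ₂ Delta1 Delta2 := by
  constructor
  · rintro ν (rfl | rfl | rfl)
    exacts [h₁.2.1, hf₁, h₁.2.2.1]
  · rintro ν (rfl | rfl | rfl)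
    exacts [h₂.2.1, hf₂, h₂.2.2.1]

variable {μ : X → ℝ}

def embedFst (hμ : ∀ x, 0 ≤ μ x ∧ μ x ≤ 1) : X → LL := fun x =>
  ⟨(μ x, 0), (hμ x).1, (hμ x).2, le_rfl, zero_le_one, by simpa using (hμ x).2⟩

def embedSnd (hμ : ∀ x, 0 ≤ μ x ∧ μ x ≤ 1) : X → LL := fun x =>
  ⟨(0, 1 - μ x), le_rfl, zero_le_one, by linarith [(hμ x).2], by linarith [(hμ x).1],
    by linarith [(hμ x).1]⟩

theorem exists_bicontinuous_ne_of_mem_left (hμ : ∀ x, 0 ≤ μ x ∧ μ x ≤ 1)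
    (h₁ : IsFuzzyTopology τ₁) (h₂ : IsFuzzyTopology τ₂) (hμτ : μ ∈ τ₁)
    {x y : X} (hxy : μ x ≠ μ y) :
    ∃ f : X → LL, Bicontinuous f τ₁ τ₂ Delta1 Delta2 ∧ f x ≠ f y := by
  refine ⟨embedFst hμ, bicontinuous_delta_of_mem h₁ h₂ hμτ ?_, ?_⟩
  · simpa [pTwoC, embedFst] using h₂.2.2.1
  · exact fun h => hxy (congrArg pOne h)

theorem exists_bicontinuous_ne_of_mem_right (hμ : ∀ x, 0 ≤ μ x ∧ μ x ≤ 1)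
    (h₁ : IsFuzzyTopology τ₁) (h₂ : IsFuzzyTopology τ₂) (hμτ : μ ∈ τ₂)
    {x y : X} (hxy : μ x ≠ μ y) :
    ∃ f : X → LL, Bicontinuous f τ₁ τ₂ Delta1 Delta2 ∧ f x ≠ f y := by
  have hpTwoC (x : X) : pTwoC (embedSnd hμ x) = μ x := by simp [pTwoC, embedSnd]
  refine ⟨embedSnd hμ, bicontinuous_delta_of_mem h₁ h₂ ?_ (by simpa only [hpTwoC]), ?_⟩
  · simpa [pOne, embedSnd] using h₁.2.1
  · exact fun h => hxy (by simpa only [hpTwoC] using congrArg pTwoC h)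

end Separation

/-- `(X, τ₁, τ₂)` is `T₀` iff the bicontinuous maps into
`(L, Δ₁, Δ₂)` separate points of `X`. -/
theorem stmt11 (X : Type) (τ₁ τ₂ : Set (X → ℝ))
    (h₁ : IsFuzzyTopology τ₁) (h₂ : IsFuzzyTopology τ₂) :
    IsT0 τ₁ τ₂ ↔
      ∀ x y : X, x ≠ y →
        ∃ f : X → LL, Bicontinuous f τ₁ τ₂ Delta1 Delta2 ∧ f x ≠ f y := by
  constructor
  · intro hT0 x y hxy
    obtain ⟨μ, hμτ | hμτ, hμxy⟩ := hT0 x y hxy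
    · exact exists_bicontinuous_ne_of_mem_left (h₁.1 μ hμτ) h₁ h₂ hμτ hμxy
    · exact exists_bicontinuous_ne_of_mem_right (h₂.1 μ hμτ) h₁ h₂ hμτ hμxy
  · intro hsep x y hxy
    obtain ⟨f, ⟨hf₁, hf₂⟩, hfxy⟩ := hsep x y hxy
    rcases pOne_ne_or_pTwoC_ne hfxy with hne | hne
    · exact ⟨_, Or.inl (hf₁ pOne (by simp [Delta1])), hne⟩
    · exact ⟨_, Or.inr (hf₂ pTwoC (by simp [Delta2])), hne⟩
end
end

section
/- For every T₀ fuzzy bitopological space (X,τ₁,τ₂), the evaluation map e : X → L^F, where F is the set of all bicontinuous maps X → L and e(x)(f) = f(x), is injective. -/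
noncomputable section
attribute [local instance] Classical.propDecidable

/-!
A point of `L` is a pair `(a, b)`, and the subbasic open sets `p₁` and `1̄ - p₂` of `Δ₁`, `Δ₂`
read off its two coordinates. A fuzzy set `μ ∈ τ₁` therefore becomes bicontinuous as
`x ↦ (μ x, 0)` (whose second coordinate is pulled back to the constant `1̄`), and `μ ∈ τ₂` as
`x ↦ (0, 1 - μ x)`. A `T₀` space has a separating `μ` in `τ₁ ∪ τ₂`, and the corresponding map
into `L` separates the two points, so `e` is injective.
-/

theorem lmem_fst_zero {a : ℝ} (ha : a ∈ Set.Icc (0 : ℝ) 1) : Lmem (a, 0) :=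
  ⟨ha.1, ha.2, le_rfl, zero_le_one, by simpa using ha.2⟩

theorem lmem_zero_one_sub {a : ℝ} (ha : a ∈ Set.Icc (0 : ℝ) 1) : Lmem (0, 1 - a) := by
  obtain ⟨h0, h1⟩ := ha
  exact ⟨le_rfl, zero_le_one, by simpa using h1, by linarith, by linarith⟩

namespace IsFuzzyTopology

variable {X : Type} {τ : Set (X → ℝ)}

theorem mem_Icc (h : IsFuzzyTopology τ) {μ : X → ℝ} (hμ : μ ∈ τ) (x : X) :
    μ x ∈ Set.Icc (0 : ℝ) 1 :=
  h.1 μ hμ x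

theorem const_zero_mem (h : IsFuzzyTopology τ) : (fun _ => (0 : ℝ)) ∈ τ :=
  h.2.1

theorem const_one_mem (h : IsFuzzyTopology τ) : (fun _ => (1 : ℝ)) ∈ τ :=
  h.2.2.1

end IsFuzzyTopology

section MapsToL

variable {X : Type} {τ₁ τ₂ : Set (X → ℝ)}

theorem bicontinuous_toL_iff (h₁ : IsFuzzyTopology τ₁) (h₂ : IsFuzzyTopology τ₂)
    (f : X → LL) :
    Bicontinuous f τ₁ τ₂ Delta1 Delta2 ↔ pOne ∘ f ∈ τ₁ ∧ pTwoC ∘ f ∈ τ₂ := by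
  refine ⟨fun hf => ⟨hf.1 pOne (by simp [Delta1]), hf.2 pTwoC (by simp [Delta2])⟩, ?_⟩
  rintro ⟨hf₁, hf₂⟩
  refine ⟨?_, ?_⟩
  · rintro ν (rfl | rfl | rfl)
    exacts [h₁.const_zero_mem, hf₁, h₁.const_one_mem]
  · rintro ν (rfl | rfl | rfl)
    exacts [h₂.const_zero_mem, hf₂, h₂.const_one_mem]

def toLFst (μ : X → ℝ) (hμ : ∀ x, μ x ∈ Set.Icc (0 : ℝ) 1) : X → LL :=
  fun x => ⟨(μ x, 0), lmem_fst_zero (hμ x)⟩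

def toLSnd (μ : X → ℝ) (hμ : ∀ x, μ x ∈ Set.Icc (0 : ℝ) 1) : X → LL :=
  fun x => ⟨(0, 1 - μ x), lmem_zero_one_sub (hμ x)⟩

theorem bicontinuous_toLFst (h₁ : IsFuzzyTopology τ₁) (h₂ : IsFuzzyTopology τ₂)
    {μ : X → ℝ} (hμ : μ ∈ τ₁) :
    Bicontinuous (toLFst μ (h₁.mem_Icc hμ)) τ₁ τ₂ Delta1 Delta2 := by
  refine (bicontinuous_toL_iff h₁ h₂ _).2 ⟨hμ, ?_⟩
  have hconst : pTwoC ∘ toLFst μ (h₁.mem_Icc hμ) = fun _ => 1 := by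
    funext x; simp [pTwoC, toLFst]
  exact hconst ▸ h₂.const_one_mem

theorem bicontinuous_toLSnd (h₁ : IsFuzzyTopology τ₁) (h₂ : IsFuzzyTopology τ₂)
    {μ : X → ℝ} (hμ : μ ∈ τ₂) :
    Bicontinuous (toLSnd μ (h₂.mem_Icc hμ)) τ₁ τ₂ Delta1 Delta2 := by
  have hconst : pOne ∘ toLSnd μ (h₂.mem_Icc hμ) = fun _ => 0 := by
    funext x; simp [pOne, toLSnd]
  have hμ' : pTwoC ∘ toLSnd μ (h₂.mem_Icc hμ) = μ := by
    funext x; simp [pTwoC, toLSnd]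
  exact (bicontinuous_toL_iff h₁ h₂ _).2 ⟨hconst ▸ h₁.const_zero_mem, by rwa [hμ']⟩

theorem exists_bicontinuous_toL_ne (h₁ : IsFuzzyTopology τ₁) (h₂ : IsFuzzyTopology τ₂)
    {μ : X → ℝ} (hμ : μ ∈ τ₁ ∪ τ₂) {x y : X} (hxy : μ x ≠ μ y) :
    ∃ f : X → LL, Bicontinuous f τ₁ τ₂ Delta1 Delta2 ∧ f x ≠ f y := by
  rcases hμ with hμ | hμ
  · refine ⟨_, bicontinuous_toLFst h₁ h₂ hμ, fun hf => hxy ?_⟩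
    simpa [toLFst] using congrArg (fun p : LL => p.1.1) hf
  · refine ⟨_, bicontinuous_toLSnd h₁ h₂ hμ, fun hf => hxy ?_⟩
    simpa [toLSnd] using congrArg (fun p : LL => p.1.2) hf

end MapsToL

/-- for a `T₀` fuzzy bitopological space, the evaluation map
`e : X → L^F`, `e(x)(f) = f(x)`, where `F` is the set of bicontinuous maps
`X → L`, is injective. -/
theorem stmt12 (X : Type) (τ₁ τ₂ : Set (X → ℝ))
    (h₁ : IsFuzzyTopology τ₁) (h₂ : IsFuzzyTopology τ₂) (h0 : IsT0 τ₁ τ₂) :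
    Function.Injective
      (fun (x : X) (f : {f : X → LL // Bicontinuous f τ₁ τ₂ Delta1 Delta2}) =>
        f.1 x) := by
  intro x y hxy
  by_contra hne
  obtain ⟨μ, hμ, hμxy⟩ := h0 x y hne
  obtain ⟨f, hf, hfxy⟩ := exists_bicontinuous_toL_ne h₁ h₂ hμ hμxy
  exact hfxy (congrFun hxy ⟨f, hf⟩)
end
end

section
/- Since p₁ ≤ 1̄ − p₂ pointwise on L, the join fuzzy topology Δ₁ ∨ Δ₂ on L equals {0̄, p₁, 1̄−p₂, 1̄}, a set with exactly 4 elements; in particular Δ₁ ∨ Δ₂ and Ω₁ ∨ Ω₂ have different cardinalities (4 vs 5), so there is no bijection between them. -/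
noncomputable section
attribute [local instance] Classical.propDecidable

/-!
Since `p₁ ≤ 1̄ - p₂`, the four maps `0̄ < p₁ < 1̄ - p₂ < 1̄` form a chain, hence a finite
sublattice of `L → [0,1]`. A finite sublattice containing `0̄` and `1̄` is closed under
arbitrary pointwise suprema, so it is already a fuzzy topology and `Δ₁ ∨ Δ₂ = Δ₁ ∪ Δ₂`.
On `2I` the maps `q₁`, `q₂` are incomparable with disjoint supports, so `q₁ ∧ q₂ = 0̄` and
`{q₁ ∧ q₂, q₁, q₂, q₁ ∨ q₂}` together with `1̄` is a five-element sublattice; every fuzzy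
topology containing `q₁` and `q₂` contains `q₁ ∨ q₂`, so this is `Ω₁ ∨ Ω₂`.
-/

section FuzzyTopology

variable {X : Type}

theorem iSup_apply_eq_finset_sup' {α : Type*} [ConditionallyCompleteLattice α]
    (s : Finset (X → α)) (hs : s.Nonempty) :
    (fun x => ⨆ μ : (s : Set (X → α)), (μ : X → α) x) = s.sup' hs id := by
  funext x
  rw [Finset.sup'_apply, Finset.sup'_eq_csSup_image, Set.image_eq_range]
  rfl

theorem IsSublattice.isFuzzyTopology {D : Set (X → ℝ)} (hD : IsSublattice D) (hfin : D.Finite)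
    (hunit : D ⊆ Set.Icc 0 1) (h0 : 0 ∈ D) (h1 : 1 ∈ D) : IsFuzzyTopology D := by
  refine ⟨fun μ hμ x => ⟨(hunit hμ).1 x, (hunit hμ).2 x⟩, h0, h1, ?_,
    fun μ hμ ν hν => hD.infClosed hμ hν⟩
  intro S hne hSD
  obtain ⟨s, rfl⟩ := (hfin.subset hSD).exists_finset_coe
  rw [iSup_apply_eq_finset_sup' s (Finset.coe_nonempty.mp hne)]
  exact hD.supClosed.finsetSup'_mem _ fun μ hμ => hSD hμ

theorem IsFuzzyTopology.sup_mem {τ : Set (X → ℝ)} (hτ : IsFuzzyTopology τ) {μ ν : X → ℝ}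
    (hμ : μ ∈ τ) (hν : ν ∈ τ) : μ ⊔ ν ∈ τ := by
  have hpair : (({μ, ν} : Finset (X → ℝ)) : Set (X → ℝ)) ⊆ τ := by
    simp [Set.insert_subset_iff, hμ, hν]
  have := hτ.2.2.2.1 _ (by simp) hpair
  rw [iSup_apply_eq_finset_sup' _ (by simp)] at this
  simpa using this

theorem joinFT_eq_of_isLeast {τ₁ τ₂ D : Set (X → ℝ)}
    (h : IsLeast {δ | IsFuzzyTopology δ ∧ τ₁ ⊆ δ ∧ τ₂ ⊆ δ} D) : joinFT τ₁ τ₂ = D :=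
  h.isGLB.sInf_eq

end FuzzyTopology

section Lattice

variable {α : Type*}

theorem IsSublattice.insert_lowerBounds [Lattice α] {s : Set α} {a : α} (hs : IsSublattice s)
    (ha : a ∈ lowerBounds s) : IsSublattice (insert a s) :=
  ⟨hs.supClosed.insert_lowerBounds ha, hs.infClosed.insert_lowerBounds ha⟩

theorem IsSublattice.insert_upperBounds [Lattice α] {s : Set α} {a : α} (hs : IsSublattice s)
    (ha : a ∈ upperBounds s) : IsSublattice (insert a s) :=
  ⟨hs.supClosed.insert_upperBounds ha, hs.infClosed.insert_upperBounds ha⟩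

theorem isSublattice_inf_sup [Lattice α] (a b : α) : IsSublattice {a ⊓ b, a, b, a ⊔ b} := by
  constructor <;>
  · intro x hx y hy
    simp only [Set.mem_insert_iff, Set.mem_singleton_iff] at hx hy ⊢
    rcases hx with rfl | rfl | rfl | rfl <;> rcases hy with rfl | rfl | rfl | rfl <;>
      simp [sup_comm, inf_comm]

theorem ncard_eq_four_of_lt_of_lt_of_lt [Preorder α] {a b c d : α} (hab : a < b) (hbc : b < c)
    (hcd : c < d) : ({a, b, c, d} : Set α).ncard = 4 := by
  have hac := hab.trans hbc
  have hbd := hbc.trans hcd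
  rw [Set.ncard_insert_of_notMem, Set.ncard_insert_of_notMem, Set.ncard_pair hcd.ne]
  · simp [hbc.ne, hbd.ne]
  · simp [hab.ne, hac.ne, (hac.trans hcd).ne]

theorem ncard_inf_sup_eq_five [Lattice α] {a b c : α} (hab : ¬a ≤ b) (hba : ¬b ≤ a)
    (hc : a ⊔ b < c) : ({a ⊓ b, a, b, a ⊔ b, c} : Set α).ncard = 5 := by
  have h₁ : a ⊓ b < a := inf_lt_left.2 hab
  have h₂ : a ⊓ b < b := inf_lt_right.2 hba
  have h₃ : a < a ⊔ b := left_lt_sup.2 hba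
  have h₄ : b < a ⊔ b := right_lt_sup.2 hab
  rw [Set.ncard_insert_of_notMem, Set.ncard_insert_of_notMem, Set.ncard_insert_of_notMem,
    Set.ncard_pair hc.ne]
  · simp [h₄.ne, (h₄.trans hc).ne]
  · have hne : a ≠ b := fun h => hab h.le
    simp [hne, h₃.ne, (h₃.trans hc).ne]
  · simp [h₁.ne, h₂.ne, (h₁.trans h₃).ne, (h₁.trans (h₃.trans hc)).ne]

end Lattice

theorem pOne_le_pTwoC : pOne ≤ pTwoC := fun z => by
  have hab : z.1.1 + z.1.2 ≤ 1 := z.2.2.2.2.2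
  simp only [pOne, pTwoC]
  linarith

theorem zero_lt_pOne : 0 < pOne :=
  Pi.lt_def.2 ⟨fun z => z.2.1, ⟨(1, 0), by norm_num [Lmem]⟩, by norm_num [pOne]⟩

theorem pOne_lt_pTwoC : pOne < pTwoC :=
  Pi.lt_def.2 ⟨pOne_le_pTwoC, ⟨(0, 0), by norm_num [Lmem]⟩, by norm_num [pOne, pTwoC]⟩

theorem pTwoC_lt_one : pTwoC < 1 :=
  Pi.lt_def.2 ⟨fun z => by simp [pTwoC, z.2.2.2.1], ⟨(0, 1), by norm_num [Lmem]⟩,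
    by norm_num [pTwoC]⟩

theorem isFuzzyTopology_pOne_pTwoC : IsFuzzyTopology ({0, pOne, pTwoC, 1} : Set (LL → ℝ)) := by
  have h₁ := zero_lt_pOne.le
  have h₂ := pOne_le_pTwoC
  have h₃ := pTwoC_lt_one.le
  refine IsSublattice.isFuzzyTopology ?_ (Set.toFinite _) ?_ (by simp) (by simp)
  · refine ((isSublattice_singleton.insert_lowerBounds ?_).insert_lowerBounds ?_)
      |>.insert_lowerBounds ?_
    all_goals simp only [lowerBounds_insert, lowerBounds_singleton, Set.mem_inter_iff, Set.mem_Iic]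
    · exact h₃
    · exact ⟨h₂, h₂.trans h₃⟩
    · exact ⟨h₁, h₁.trans h₂, h₁.trans (h₂.trans h₃)⟩
  · simp only [Set.insert_subset_iff, Set.singleton_subset_iff, Set.mem_Icc]
    exact ⟨⟨le_rfl, zero_le_one⟩, ⟨h₁, h₂.trans h₃⟩, ⟨h₁.trans h₂, h₃⟩, ⟨zero_le_one, le_rfl⟩⟩

theorem joinFT_Delta1_Delta2 : joinFT Delta1 Delta2 = {0, pOne, pTwoC, 1} := by
  refine joinFT_eq_of_isLeast ⟨⟨isFuzzyTopology_pOne_pTwoC, ?_, ?_⟩, ?_⟩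
  · show ({0, pOne, 1} : Set (LL → ℝ)) ⊆ _
    simp [Set.insert_subset_iff]
  · show ({0, pTwoC, 1} : Set (LL → ℝ)) ⊆ _
    simp [Set.insert_subset_iff]
  · rintro δ ⟨hδ, h₁, h₂⟩
    simp only [Set.insert_subset_iff, Set.singleton_subset_iff]
    exact ⟨hδ.2.1, h₁ (by simp [Delta1]), h₂ (by simp [Delta2]), hδ.2.2.1⟩

theorem ncard_joinFT_Delta1_Delta2 : (joinFT Delta1 Delta2).ncard = 4 := by
  rw [joinFT_Delta1_Delta2]
  exact ncard_eq_four_of_lt_of_lt_of_lt zero_lt_pOne pOne_lt_pTwoC pTwoC_lt_one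

theorem TwoI.fst_mem_Icc (z : TwoI) : z.1.1 ∈ Set.Icc (0 : ℝ) 1 := by
  rcases z.2 with ⟨h₀, h₁, -⟩ | ⟨h, -, -⟩
  · exact ⟨h₀, h₁⟩
  · simp [h]

theorem TwoI.snd_mem_Icc (z : TwoI) : z.1.2 ∈ Set.Icc (0 : ℝ) 1 := by
  rcases z.2 with ⟨-, -, h⟩ | ⟨-, h₀, h₁⟩
  · simp [h]
  · exact ⟨h₀, h₁⟩

theorem q1_mem_Icc : q1 ∈ Set.Icc 0 1 := by
  constructor <;> intro z <;> have := z.fst_mem_Icc <;> unfold q1 <;> split_ifs <;> simp_all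

theorem q2_mem_Icc : q2 ∈ Set.Icc 0 1 := by
  constructor <;> intro z <;> have := z.snd_mem_Icc <;> unfold q2 <;> split_ifs <;> simp_all

theorem q1_inf_q2 : q1 ⊓ q2 = 0 := by
  funext z
  simp only [Pi.inf_apply, Pi.zero_apply, q1, q2]
  rcases z.2 with ⟨-, -, h⟩ | ⟨h, -, -⟩ <;> simp [h, z.fst_mem_Icc.1, z.snd_mem_Icc.1]

theorem not_q1_le_q2 : ¬q1 ≤ q2 := fun h => by
  have h' := h ⟨(1, 0), by norm_num⟩
  norm_num [q1, q2] at h'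

theorem not_q2_le_q1 : ¬q2 ≤ q1 := fun h => by
  have h' := h ⟨(0, 1), by norm_num⟩
  norm_num [q1, q2] at h'

theorem q1_sup_q2_lt_one : q1 ⊔ q2 < 1 :=
  Pi.lt_def.2 ⟨sup_le q1_mem_Icc.2 q2_mem_Icc.2, ⟨(0, 0), by norm_num⟩, by norm_num [q1, q2]⟩

theorem isFuzzyTopology_q1_q2 :
    IsFuzzyTopology ({0, q1, q2, q1 ⊔ q2, 1} : Set (TwoI → ℝ)) := by
  have hq := q1_sup_q2_lt_one.le
  refine IsSublattice.isFuzzyTopology ?_ (Set.toFinite _) ?_ (by simp) (by simp)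
  · have hD : ({0, q1, q2, q1 ⊔ q2, 1} : Set (TwoI → ℝ)) =
        insert 1 {q1 ⊓ q2, q1, q2, q1 ⊔ q2} := by
      rw [q1_inf_q2]
      ext
      simp only [Set.mem_insert_iff, Set.mem_singleton_iff]
      tauto
    rw [hD]
    refine (isSublattice_inf_sup q1 q2).insert_upperBounds ?_
    rintro μ (rfl | rfl | rfl | rfl)
    exacts [inf_le_left.trans (le_sup_left.trans hq), le_sup_left.trans hq,
      le_sup_right.trans hq, hq]
  · simp only [Set.insert_subset_iff, Set.singleton_subset_iff]
    exact ⟨⟨le_rfl, zero_le_one⟩, q1_mem_Icc, q2_mem_Icc, ⟨q1_mem_Icc.1.trans le_sup_left, hq⟩,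
      ⟨zero_le_one, le_rfl⟩⟩

theorem joinFT_Omega1_Omega2 : joinFT Omega1 Omega2 = {0, q1, q2, q1 ⊔ q2, 1} := by
  refine joinFT_eq_of_isLeast ⟨⟨isFuzzyTopology_q1_q2, ?_, ?_⟩, ?_⟩
  · show ({0, q1, 1} : Set (TwoI → ℝ)) ⊆ _
    simp [Set.insert_subset_iff]
  · show ({0, q2, 1} : Set (TwoI → ℝ)) ⊆ _
    simp [Set.insert_subset_iff]
  · rintro δ ⟨hδ, h₁, h₂⟩
    have hq1 : q1 ∈ δ := h₁ (by simp [Omega1])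
    have hq2 : q2 ∈ δ := h₂ (by simp [Omega2])
    simp only [Set.insert_subset_iff, Set.singleton_subset_iff]
    exact ⟨hδ.2.1, hq1, hq2, hδ.sup_mem hq1 hq2, hδ.2.2.1⟩

theorem ncard_joinFT_Omega1_Omega2 : (joinFT Omega1 Omega2).ncard = 5 := by
  rw [joinFT_Omega1_Omega2, ← q1_inf_q2]
  exact ncard_inf_sup_eq_five not_q1_le_q2 not_q2_le_q1 q1_sup_q2_lt_one

/-- since `p₁ ≤ 1̄ - p₂`, the join `Δ₁ ∨ Δ₂` equals
`{0̄, p₁, 1̄ - p₂, 1̄}`, which has exactly 4 elements; hence there is no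
bijection between `Δ₁ ∨ Δ₂` and `Ω₁ ∨ Ω₂` (which has 5 elements). -/
theorem stmt18 :
    (∀ z : LL, pOne z ≤ pTwoC z) ∧
    joinFT Delta1 Delta2 = {fun _ => 0, pOne, pTwoC, fun _ => 1} ∧
    (joinFT Delta1 Delta2).ncard = 4 ∧
    (joinFT Omega1 Omega2).ncard = 5 ∧
    ¬ ∃ F : (LL → ℝ) → (TwoI → ℝ),
        Set.BijOn F (joinFT Delta1 Delta2) (joinFT Omega1 Omega2) := by
  refine ⟨pOne_le_pTwoC, joinFT_Delta1_Delta2, ncard_joinFT_Delta1_Delta2,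
    ncard_joinFT_Omega1_Omega2, ?_⟩
  rintro ⟨F, hF⟩
  have := hF.ncard_eq
  rw [ncard_joinFT_Delta1_Delta2, ncard_joinFT_Omega1_Omega2] at this
  omega
end
end
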